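/- Fix δ > 0, define w̃ : ℝ → ℝ by w̃(x) = 1/(W(x) + δ) − 3/(2 + 3δ), let m ≥ 1 be an integer, and let f : ℤ → ℝ. Define, for real x ∈ (0, m) that is not an integer, L(x) = (Σ_{i=0}^{m} f(i)/w̃(x − i)) / (Σ_{i=0}^{m} 1/w̃(x − i)). Then for every integer j with 0 < j < m, L(x) tends to f(j) as x tends to j through non-integer values; that is, the moving least-squares method with the weight 1/w̃, which is infinite at the data points, is interpolatory. -/

import Mathlib

noncomputable def W (x : ℝ) : ℝ :=
  if x < -2 then 0
  else if x < -1 then (1/6) * (x + 2)^3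
  else if x < 0 then -(1/2) * x^3 - x^2 + 2/3
  else if x < 1 then (1/2) * x^3 - x^2 + 2/3
  else if x < 2 then -(1/6) * (x - 2)^3
  else 0

open Filter Topology

/-! `W` is the centred cubic B-spline: it is continuous, nonnegative, and attains its maximum
`2/3` only at `0`. Hence the weight `w̃ = mlsWeight δ` is continuous, vanishes at `0` and is
positive elsewhere. Multiplying numerator and denominator of `L x` by `w̃ (x - j)` turns them into
`∑ f i * (w̃ (x - j) / w̃ (x - i))` and `∑ w̃ (x - j) / w̃ (x - i)`; as `x → j` the ratio with
`i = j` is `1` and every other ratio tends to `0 / w̃ (j - i) = 0`, so `L x → f j`. -/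

-- The fourth central difference of the truncated cubes `max t 0 ^ 3`, divided by `3!`.
lemma W_eq_truncatedPowers (x : ℝ) :
    W x = (max (x + 2) 0 ^ 3 - 4 * max (x + 1) 0 ^ 3 + 6 * max x 0 ^ 3
      - 4 * max (x - 1) 0 ^ 3 + max (x - 2) 0 ^ 3) / 6 := by
  unfold W
  simp only [max_def']
  split_ifs <;> first | (exfalso; linarith) | ring

lemma continuous_W : Continuous W := by
  simp only [funext W_eq_truncatedPowers]
  fun_prop

lemma W_nonneg (x : ℝ) : 0 ≤ W x := by
  unfold W
  split_ifs <;> nlinarith [sq_nonneg x, sq_nonneg (x + 1), sq_nonneg (x - 1), sq_nonneg (x + 2),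
    sq_nonneg (x - 2)]

lemma W_zero : W 0 = 2 / 3 := by
  norm_num [W]

lemma W_lt_of_ne_zero {x : ℝ} (hx : x ≠ 0) : W x < 2 / 3 := by
  unfold W
  split_ifs with _ _ hneg
  · norm_num
  · nlinarith [sq_nonneg (x + 2), sq_nonneg (x + 1)]
  · nlinarith [mul_pos (mul_pos (neg_pos.2 hneg) (neg_pos.2 hneg))
      (by linarith : (0:ℝ) < x / 2 + 1)]
  · have hpos : 0 < x := lt_of_le_of_ne (not_lt.1 hneg) (Ne.symm hx)
    nlinarith [mul_pos (mul_pos hpos hpos) (by linarith : (0:ℝ) < 1 - x / 2)]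
  · nlinarith [sq_nonneg (x - 2), sq_nonneg (x - 1)]
  · norm_num

noncomputable def mlsWeight (δ x : ℝ) : ℝ := 1 / (W x + δ) - 3 / (2 + 3 * δ)

lemma continuous_mlsWeight {δ : ℝ} (hδ : 0 < δ) : Continuous (mlsWeight δ) :=
  (continuous_const.div (continuous_W.add continuous_const)
    fun x => (add_pos_of_nonneg_of_pos (W_nonneg x) hδ).ne').sub continuous_const

lemma mlsWeight_zero {δ : ℝ} (hδ : 0 < δ) : mlsWeight δ 0 = 0 := by
  rw [mlsWeight, W_zero, sub_eq_zero, div_eq_div_iff (by linarith) (by linarith)]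
  ring

lemma mlsWeight_pos {δ x : ℝ} (hδ : 0 < δ) (hx : x ≠ 0) : 0 < mlsWeight δ x := by
  have hW := W_lt_of_ne_zero hx
  rw [mlsWeight, sub_pos, div_lt_div_iff₀ (by linarith) (by linarith [W_nonneg x])]
  linarith

lemma tendsto_sum_div_div_sum_one_div {ι α : Type*} {l : Filter α} {s : Finset ι}
    [DecidableEq ι] {w : ι → α → ℝ} {c : ι → ℝ} (a : ι → ℝ) {j : ι} (hj : j ∈ s)
    (hwj : Tendsto (w j) l (𝓝 0)) (hwj_ne : ∀ᶠ x in l, w j x ≠ 0)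
    (hw : ∀ i ∈ s, i ≠ j → Tendsto (w i) l (𝓝 (c i))) (hc : ∀ i ∈ s, i ≠ j → c i ≠ 0) :
    Tendsto (fun x => (∑ i ∈ s, a i / w i x) / ∑ i ∈ s, 1 / w i x) l (𝓝 (a j)) := by
  have hratio : ∀ i ∈ s, Tendsto (fun x => w j x / w i x) l (𝓝 (if i = j then 1 else 0)) := by
    intro i hi
    split_ifs with hij
    · subst hij
      exact tendsto_const_nhds.congr' (hwj_ne.mono fun x hx => (div_self hx).symm)
    · have := hwj.div (hw i hi hij) (hc i hi hij)
      rwa [zero_div] at this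
  have hnum : Tendsto (fun x => ∑ i ∈ s, a i * (w j x / w i x)) l (𝓝 (a j)) := by
    simpa [hj] using tendsto_finsetSum s fun i hi => (hratio i hi).const_mul (a i)
  have hden : Tendsto (fun x => ∑ i ∈ s, w j x / w i x) l (𝓝 1) := by
    simpa [hj] using tendsto_finsetSum s hratio
  refine (by simpa using hnum.div hden one_ne_zero : Tendsto _ l _).congr' ?_
  filter_upwards [hwj_ne] with x hx
  rw [Pi.div_apply, ← mul_div_mul_right (∑ i ∈ s, a i / w i x) _ hx, Finset.sum_mul,
    Finset.sum_mul]
  congr 1 <;> refine Finset.sum_congr rfl fun i _ => by ring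

lemma tendsto_sum_div_shift_nhdsNE {w : ℝ → ℝ} (hw : Continuous w) (hw0 : w 0 = 0)
    (hw_ne : ∀ x ≠ 0, w x ≠ 0) (a : ℕ → ℝ) {n m : ℕ} (hnm : n ≤ m) :
    Tendsto (fun x => (∑ i ∈ Finset.range (m + 1), a i / w (x - i)) /
      ∑ i ∈ Finset.range (m + 1), 1 / w (x - i)) (𝓝[≠] (n : ℝ)) (𝓝 (a n)) := by
  have hshift : ∀ i : ℕ, Tendsto (fun x : ℝ => w (x - i)) (𝓝[≠] (n : ℝ)) (𝓝 (w (n - i))) :=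
    fun i => ((hw.comp (continuous_sub_right _)).tendsto _).mono_left nhdsWithin_le_nhds
  refine tendsto_sum_div_div_sum_one_div a (Finset.mem_range_succ_iff.2 hnm) ?_ ?_
    (fun i _ _ => hshift i) fun i _ hi => hw_ne _ (sub_ne_zero.2 (Nat.cast_injective.ne hi.symm))
  · simpa [hw0] using hshift n
  · filter_upwards [self_mem_nhdsWithin] with x hx
    exact hw_ne _ (sub_ne_zero.2 hx)

theorem mls_interpolation_general (δ : ℝ) (hδ : 0 < δ)
    (wt : ℝ → ℝ) (hwt : wt = fun x => 1 / (W x + δ) - 3 / (2 + 3 * δ))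
    (m : ℕ) (f : ℤ → ℝ)
    (L : ℝ → ℝ)
    (hL : L = fun x =>
      (∑ i ∈ Finset.range (m + 1), f i / wt (x - i)) /
        (∑ i ∈ Finset.range (m + 1), 1 / wt (x - i)))
    (j : ℤ) (hj0 : 0 < j) (hjm : j < m) :
    Tendsto L
      (𝓝[{x : ℝ | x ∈ Set.Ioo (0 : ℝ) (m : ℝ) ∧ ∀ k : ℤ, x ≠ (k : ℝ)}] (j : ℝ))
      (𝓝 (f j)) := by
  lift j to ℕ using hj0.le
  have hwt' : wt = mlsWeight δ := hwt
  subst hL hwt'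
  refine (tendsto_sum_div_shift_nhdsNE (continuous_mlsWeight hδ) (mlsWeight_zero hδ)
    (fun x hx => (mlsWeight_pos hδ hx).ne') (fun i => f i) (by exact_mod_cast hjm.le)).mono_left
    (nhdsWithin_mono _ fun x hx => ?_)
  simpa using hx.2 j

/-- Interpolation property of the moving least-squares method with the weight
`1/w̃`, which is infinite at the data points: for every interior data point
`j`, the approximation
`L x = (∑_{i=0}^{m} f i / w̃ (x − i)) / (∑_{i=0}^{m} 1 / w̃ (x − i))`
tends to `f j` as `x → j` through non-integer values of `(0, m)`. -/
theorem mls_interpolation (δ : ℝ) (hδ : 0 < δ)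
    (wt : ℝ → ℝ) (hwt : wt = fun x => 1 / (W x + δ) - 3 / (2 + 3 * δ))
    (m : ℕ) (hm : 1 ≤ m) (f : ℤ → ℝ)
    (L : ℝ → ℝ)
    (hL : L = fun x =>
      (∑ i ∈ Finset.range (m + 1), f i / wt (x - i)) /
        (∑ i ∈ Finset.range (m + 1), 1 / wt (x - i)))
    (j : ℤ) (hj0 : 0 < j) (hjm : j < m) :
    Tendsto L
      (𝓝[{x : ℝ | x ∈ Set.Ioo (0 : ℝ) (m : ℝ) ∧ ∀ k : ℤ, x ≠ (k : ℝ)}] (j : ℝ))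
      (𝓝 (f j)) :=
  mls_interpolation_general δ hδ wt hwt m f L hL j hj0 hjm
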